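/- arXiv:2206.01946 — 2 statements merged into one kernel-verified Lean document; each statement's English description precedes it below -/
import Mathlib

section
/- For every semi-deterministic Büchi automaton A, the NCSB-MaxRank construction produces a Büchi automaton recognizing exactly Σ^ω \ L(A). -/
attribute [local instance] Classical.propDecidable

universe u v

variable {A : Type u} {Q : Type v}

/-- `π` is an (infinite) trace of the transition function `δ` over the word `w`. -/
def IsTrace (δ : Q → A → Set Q) (w : ℕ → A) (π : ℕ → Q) : Prop :=
  ∀ i, π (i + 1) ∈ δ (π i) (w i)

/-- co-Büchi acceptance: only finitely many visits to `F`. -/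
def FinAcc (F : Set Q) (π : ℕ → Q) : Prop := ∃ n, ∀ m ≥ n, π m ∉ F

/-- Büchi acceptance (state-based): infinitely many visits to `F`. -/
def InfAcc (F : Set Q) (π : ℕ → Q) : Prop := ∀ n, ∃ m ≥ n, π m ∈ F

/-- Büchi acceptance with accepting states `F` and accepting transitions `δF`. -/
def BuchiAccT (F : Set Q) (δF : Set (Q × A × Q)) (w : ℕ → A) (π : ℕ → Q) : Prop :=
  ∀ n, ∃ m ≥ n, π m ∈ F ∨ (π m, w m, π (m + 1)) ∈ δF

/-- Successors of a set of states. -/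
def stepSet (δ : Q → A → Set Q) (S : Set Q) (a : A) : Set Q := ⋃ p ∈ S, δ p a

/-- The subset-construction sequence `ρ^B_α`. -/
def subsetSeq (δ : Q → A → Set Q) (w : ℕ → A) (B : Set Q) : ℕ → Set Q
  | 0 => B
  | i + 1 => stepSet δ (subsetSeq δ w B i) (w i)

/-- `Π_ρ`: the traces over `w` matching the sequence of sets `ρ` componentwise. -/
def TraceSet (δ : Q → A → Set Q) (w : ℕ → A) (ρ : ℕ → Set Q) : Set (ℕ → Q) :=
  {π | IsTrace δ w π ∧ ∀ i, π i ∈ ρ i}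

/-- `Π_ρ` contains a (co-Büchi-)accepting trace. -/
def HasAccTrace (δ : Q → A → Set Q) (F : Set Q) (w : ℕ → A) (ρ : ℕ → Set Q) : Prop :=
  ∃ π ∈ TraceSet δ w ρ, FinAcc F π

/-- `Π_ρ^∪` (the union of the trace sets of all suffixes) contains an accepting trace. -/
def HasAccTraceU (δ : Q → A → Set Q) (F : Set Q) (w : ℕ → A) (ρ : ℕ → Set Q) : Prop :=
  ∃ i, HasAccTrace δ F (fun n => w (n + i)) (fun n => ρ (n + i))

/-- Reachability in the automaton. -/
def Reaches (δ : Q → A → Set Q) : Q → Q → Prop :=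
  Relation.ReflTransGen (fun p q => ∃ a, q ∈ δ p a)

/-- The maximal SCC containing `q`. -/
def scc (δ : Q → A → Set Q) (q : Q) : Set Q :=
  {p | Reaches δ p q ∧ Reaches δ q p}

/-- Weak automaton: states of the same SCC agree on acceptance. -/
def IsWeak (δ : Q → A → Set Q) (F : Set Q) : Prop :=
  ∀ p q, Reaches δ p q → Reaches δ q p → (p ∈ F ↔ q ∈ F)

/-- Fair simulation on the co-BA `(Q, δ, _, F, ∅)`. -/
def FairSim (δ : Q → A → Set Q) (F : Set Q) (p q : Q) : Prop :=
  ∀ (w : ℕ → A) (π : ℕ → Q), π 0 = p → IsTrace δ w π → FinAcc F π →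
    ∃ π', π' 0 = q ∧ IsTrace δ w π' ∧ FinAcc F π'

/-- `R` is a direct-simulation relation on the BA `(Q, δ, _, F, ∅)`. -/
def IsDirectSim (δ : Q → A → Set Q) (F : Set Q) (R : Q → Q → Prop) : Prop :=
  ∀ p q, R p q → (p ∈ F → q ∈ F) ∧ ∀ a, ∀ p' ∈ δ p a, ∃ q' ∈ δ q a, R p' q'

/-- `p` is directly simulated by `q`. -/
def DirectSim (δ : Q → A → Set Q) (F : Set Q) (p q : Q) : Prop :=
  ∃ R, IsDirectSim δ F R ∧ R p q

/-- The relation `⊑`: fair simulation refined by the reachability conditions. -/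
def SqSub (δ : Q → A → Set Q) (F : Set Q) (p q : Q) : Prop :=
  FairSim δ F p q ∧ Reaches δ p q ∧ (¬ Reaches δ q p ∨ p = q)

/-- One step of the Miyano–Hayashi-style construction with adjustment function `θ`. -/
noncomputable def mhStep (δ : Q → A → Set Q) (F : Set Q) (θ : Set Q → Set Q)
    (m : Set Q × Set Q) (a : A) : Set Q × Set Q :=
  let S' := θ (stepSet δ m.1 a)
  (S', if m.2 = ∅ then S' \ F else (stepSet δ m.2 a ∩ S') \ F)

/-- The (unique) run of the deterministic automaton `MiHay_θ(A_c)` on `w`. -/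
noncomputable def mhRun (δ : Q → A → Set Q) (F : Set Q) (θ : Set Q → Set Q)
    (I : Set Q) (w : ℕ → A) : ℕ → Set Q × Set Q
  | 0 => (θ I, θ I \ F)
  | i + 1 => mhStep δ F θ (mhRun δ F θ I w i) (w i)

/-- `MiHay_θ(A_c)` accepts `w`: the `B`-component is empty infinitely often. -/
def MhAccepts (δ : Q → A → Set Q) (F : Set Q) (θ : Set Q → Set Q)
    (I : Set Q) (w : ℕ → A) : Prop :=
  ∀ n, ∃ m ≥ n, (mhRun δ F θ I w m).2 = (∅ : Set Q)

/-- `w ∈ L(A_c)` for the co-BA `A_c = (Q, δ, I, F, ∅)`. -/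
def CoBuchiLang (δ : Q → A → Set Q) (I F : Set Q) (w : ℕ → A) : Prop :=
  ∃ π, π 0 ∈ I ∧ IsTrace δ w π ∧ FinAcc F π

/-- `w ∈ L(A)` for the BA `A = (Q, δ, I, F, δF)`. -/
def BuchiLang (δ : Q → A → Set Q) (I F : Set Q) (δF : Set (Q × A × Q)) (w : ℕ → A) : Prop :=
  ∃ π, π 0 ∈ I ∧ IsTrace δ w π ∧ BuchiAccT F δF w π

/-- Macrostates `(N, C, S, B)` of the NCSB-MaxRank construction. -/
abbrev Macro (Q : Type v) := Set Q × Set Q × Set Q × Set Q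

/-- The successor relation `δ'` of NCSB-MaxRank. -/
noncomputable def NcsbSucc (δ : Q → A → Set Q) (Q1 Q2 F : Set Q) (δF : Set (Q × A × Q))
    (m : Macro Q) (a : A) (m' : Macro Q) : Prop :=
  (¬ ∃ p ∈ m.2.2.1, ∃ q ∈ δ p a, (p, a, q) ∈ δF) ∧
  (let N' := stepSet δ m.1 a ∩ Q1
   let S' := stepSet δ m.2.2.1 a
   let C' := ((stepSet δ m.1 a ∩ Q2) ∪ stepSet δ m.2.1 a) \ S'
   let B' := if m.2.2.2 = ∅ then C' else stepSet δ m.2.2.2 a ∩ C'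
   m' = (N', C', S', B') ∨ (B' ∩ F = ∅ ∧ m' = (N', C' \ (S' ∪ B'), S' ∪ B', (∅ : Set Q))))

/-- Well-formed macrostates of NCSB-MaxRank. -/
def NcsbState (Q1 Q2 F : Set Q) (m : Macro Q) : Prop :=
  m.1 ⊆ Q1 ∧ m.2.1 ⊆ Q2 ∧ m.2.2.1 ⊆ Q2 \ F ∧ m.2.2.2 ⊆ m.2.1

/-- `R` is a run of `NCSB-MaxRank(A)` on `w`. -/
noncomputable def NcsbRun (δ : Q → A → Set Q) (Q1 Q2 I F : Set Q) (δF : Set (Q × A × Q))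
    (w : ℕ → A) (R : ℕ → Macro Q) : Prop :=
  R 0 = (Q1 ∩ I, Q2 ∩ I, (∅ : Set Q), Q2 ∩ I) ∧
  (∀ i, NcsbState Q1 Q2 F (R i)) ∧
  ∀ i, NcsbSucc δ Q1 Q2 F δF (R i) (w i) (R (i + 1))

/-- A run of `NCSB-MaxRank(A)` is accepting: `B = ∅` infinitely often. -/
def NcsbAcc (R : ℕ → Macro Q) : Prop := ∀ n, ∃ m ≥ n, (R m).2.2.2 = (∅ : Set Q)

/-!
Soundness: an accepting run of `A` is always covered by `N ∪ C ∪ S`; it can never enter `S`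
(where accepting events are forbidden), so once it has entered `Q₂` it stays in `C`.
From the next time `B` is emptied it is trapped in `B`, so `B` is not empty infinitely often.

Completeness: call a set of states safe at position `i` if no accepting state or transition is
reachable from it along the rest of the word. The greedy run moves `B'` into `S` exactly when
`B'` is safe, which keeps `S` safe. If `w ∉ L(A)`, every reachable state of the deterministic
part `Q₂` follows a single path with finitely many accepting events; as `Q` is finite, the
descendants of any `B` therefore become safe after a bounded number of steps, and `B` is emptied
again.
-/

section Reachability

variable {δ : Q → A → Set Q} {w : ℕ → A}

lemma mem_stepSet {X : Set Q} {a : A} {p : Q} :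
    p ∈ stepSet δ X a ↔ ∃ r ∈ X, p ∈ δ r a := by
  simp [stepSet]

lemma stepSet_mono {X Y : Set Q} (h : X ⊆ Y) (a : A) : stepSet δ X a ⊆ stepSet δ Y a :=
  Set.biUnion_subset_biUnion_left h

lemma subsetSeq_mono {X Y : Set Q} (h : X ⊆ Y) : ∀ k, subsetSeq δ w X k ⊆ subsetSeq δ w Y k
  | 0 => h
  | k + 1 => stepSet_mono (subsetSeq_mono h k) _

lemma stepSet_subset_of_closed {Q2 X : Set Q} (hclosed : ∀ q ∈ Q2, ∀ a, δ q a ⊆ Q2)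
    (hX : X ⊆ Q2) (a : A) : stepSet δ X a ⊆ Q2 :=
  Set.iUnion₂_subset fun q hq => hclosed q (hX hq) a

lemma subsetSeq_add (w : ℕ → A) (X : Set Q) (k : ℕ) : ∀ j,
    subsetSeq δ w X (k + j) = subsetSeq δ (fun n => w (k + n)) (subsetSeq δ w X k) j
  | 0 => rfl
  | j + 1 => congrArg (stepSet δ · (w (k + j))) (subsetSeq_add w X k j)

lemma mem_subsetSeq_iff {X : Set Q} {p : Q} {k : ℕ} :
    p ∈ subsetSeq δ w X k ↔ ∃ q ∈ X, p ∈ subsetSeq δ w {q} k := by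
  induction k generalizing p with
  | zero => simp [subsetSeq]
  | succ k ih =>
    simp only [subsetSeq, mem_stepSet, ih]
    grind

lemma subsetSeq_subset_of_closed {Q2 X : Set Q} (hclosed : ∀ q ∈ Q2, ∀ a, δ q a ⊆ Q2)
    (hX : X ⊆ Q2) : ∀ k, subsetSeq δ w X k ⊆ Q2
  | 0 => hX
  | k + 1 => stepSet_subset_of_closed hclosed (subsetSeq_subset_of_closed hclosed hX k) _

lemma subsetSeq_subsingleton {Q2 X : Set Q} (hclosed : ∀ q ∈ Q2, ∀ a, δ q a ⊆ Q2)
    (hdet : ∀ q ∈ Q2, ∀ a, (δ q a).Subsingleton) (hX : X ⊆ Q2) (hX1 : X.Subsingleton) :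
    ∀ k, (subsetSeq δ w X k).Subsingleton
  | 0 => hX1
  | k + 1 => by
    intro p hp p' hp'
    obtain ⟨r, hr, hpr⟩ := mem_stepSet.1 hp
    obtain ⟨r', hr', hpr'⟩ := mem_stepSet.1 hp'
    obtain rfl := subsetSeq_subsingleton hclosed hdet hX hX1 k hr hr'
    exact hdet r (subsetSeq_subset_of_closed hclosed hX k hr) _ hpr hpr'

lemma antitone_subsetSeq_nonempty (X : Set Q) :
    Antitone fun k => (subsetSeq δ w X k).Nonempty :=
  antitone_nat_of_succ_le fun _ ⟨_, hp⟩ =>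
    let ⟨r, hr, _⟩ := mem_stepSet.1 hp
    ⟨r, hr⟩

lemma exists_trace_of_mem_subsetSeq {I : Set Q} {n : ℕ} {q : Q} (hq : q ∈ subsetSeq δ w I n)
    {ρ : ℕ → Q} (hρ0 : ρ 0 = q) (hρ : IsTrace δ (fun k => w (n + k)) ρ) :
    ∃ π, π 0 ∈ I ∧ IsTrace δ w π ∧ ∀ k, π (n + k) = ρ k := by
  induction n generalizing q ρ with
  | zero => exact ⟨ρ, hρ0 ▸ hq, by simpa using hρ, by simp⟩
  | succ n ih =>
    obtain ⟨r, hr, hqr⟩ := mem_stepSet.1 hq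
    let ρ' : ℕ → Q := fun | 0 => r | k + 1 => ρ k
    have hρ' : IsTrace δ (fun k => w (n + k)) ρ' := fun
      | 0 => show ρ 0 ∈ δ r (w n) from hρ0 ▸ hqr
      | k + 1 => by simpa [ρ', Nat.add_right_comm, Nat.add_assoc] using hρ k
    obtain ⟨π, hπI, hπ, hπρ⟩ := ih hr rfl hρ'
    exact ⟨π, hπI, hπ, fun k => by rw [Nat.add_right_comm]; exact hπρ (k + 1)⟩

end Reachability

def AccEvent (δ : Q → A → Set Q) (F : Set Q) (δF : Set (Q × A × Q)) (a : A) (p : Q) :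
    Prop :=
  p ∈ F ∨ ∃ q ∈ δ p a, (p, a, q) ∈ δF

def Safe (δ : Q → A → Set Q) (F : Set Q) (δF : Set (Q × A × Q)) (w : ℕ → A) (i : ℕ)
    (X : Set Q) : Prop :=
  ∀ k, ∀ p ∈ subsetSeq δ (fun n => w (i + n)) X k, ¬ AccEvent δ F δF (w (i + k)) p

namespace Safe

variable {δ : Q → A → Set Q} {F : Set Q} {δF : Set (Q × A × Q)} {w : ℕ → A} {i : ℕ}
  {X Y : Set Q}

lemma not_accEvent (h : Safe δ F δF w i X) {p : Q} (hp : p ∈ X) :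
    ¬ AccEvent δ F δF (w i) p :=
  h 0 p hp

lemma mono (h : Safe δ F δF w i Y) (hXY : X ⊆ Y) : Safe δ F δF w i X :=
  fun k p hp => h k p (subsetSeq_mono hXY k hp)

lemma union (hX : Safe δ F δF w i X) (hY : Safe δ F δF w i Y) :
    Safe δ F δF w i (X ∪ Y) := by
  intro k p hp
  obtain ⟨q, hq | hq, hpq⟩ := mem_subsetSeq_iff.1 hp
  · exact hX k p (mem_subsetSeq_iff.2 ⟨q, hq, hpq⟩)
  · exact hY k p (mem_subsetSeq_iff.2 ⟨q, hq, hpq⟩)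

lemma stepSet (h : Safe δ F δF w i X) : Safe δ F δF w (i + 1) (stepSet δ X (w i)) := by
  intro k p hp
  have := h (1 + k) p
  rw [subsetSeq_add] at this
  simp only [Nat.add_assoc] at this hp ⊢
  exact this hp

end Safe

section EventualSafety

variable {δ : Q → A → Set Q} {Q2 I F : Set Q} {δF : Set (Q × A × Q)} {w : ℕ → A}

/-- Inside the deterministic part the future of a reachable state is a single path; if it met
accepting events infinitely often, prefixing it with a path from `I` would accept `w`. -/
lemma eventually_not_accEvent (hclosed : ∀ q ∈ Q2, ∀ a, δ q a ⊆ Q2)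
    (hdet : ∀ q ∈ Q2, ∀ a, (δ q a).Subsingleton) (hnL : ¬ BuchiLang δ I F δF w) {n : ℕ}
    {q : Q} (hq2 : q ∈ Q2) (hqI : q ∈ subsetSeq δ w I n) :
    ∀ᶠ k in Filter.atTop, ∀ p ∈ subsetSeq δ (fun j => w (n + j)) {q} k,
      ¬ AccEvent δ F δF (w (n + k)) p := by
  set reach := subsetSeq δ (fun j => w (n + j)) {q}
  by_contra h
  simp only [Filter.not_eventually, not_forall, not_not, exists_prop] at h
  have hne : ∀ k, (reach k).Nonempty := fun k =>
    let ⟨_, hk, p, hp, _⟩ := h.forall_exists_of_atTop k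
    antitone_subsetSeq_nonempty _ hk ⟨p, hp⟩
  choose ρ hρ using hne
  have hreach : ∀ k, ∀ p ∈ reach k, p = ρ k := fun k _ hp =>
    subsetSeq_subsingleton hclosed hdet (Set.singleton_subset_iff.2 hq2)
      Set.subsingleton_singleton k hp (hρ k)
  have hρtrace : IsTrace δ (fun j => w (n + j)) ρ := fun k => by
    obtain ⟨r, hr, hrk⟩ := mem_stepSet.1 (hρ (k + 1))
    rwa [hreach k r hr] at hrk
  obtain ⟨π, hπI, hπ, hπρ⟩ := exists_trace_of_mem_subsetSeq hqI (hρ 0) hρtrace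
  refine hnL ⟨π, hπI, hπ, fun N => ?_⟩
  obtain ⟨k, hNk, p, hp, hacc⟩ := h.forall_exists_of_atTop N
  refine ⟨n + k, by omega, ?_⟩
  rw [hπρ, show n + k + 1 = n + (k + 1) from rfl, hπρ, ← hreach k p hp]
  rcases hacc with hF | ⟨p', hp', hδF⟩
  · exact Or.inl hF
  · rw [hreach (k + 1) p' (mem_stepSet.2 ⟨p, hp, hp'⟩)] at hδF
    exact Or.inr hδF

lemma exists_safe_subsetSeq (hclosed : ∀ q ∈ Q2, ∀ a, δ q a ⊆ Q2)
    (hdet : ∀ q ∈ Q2, ∀ a, (δ q a).Subsingleton) (hnL : ¬ BuchiLang δ I F δF w) {n : ℕ}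
    {X : Set Q} (hX : X.Finite) (hX2 : X ⊆ Q2) (hXI : X ⊆ subsetSeq δ w I n) :
    ∃ k, Safe δ F δF w (n + k) (subsetSeq δ (fun j => w (n + j)) X k) := by
  obtain ⟨k, hk⟩ := Filter.eventually_atTop.1 <| (Filter.eventually_all_finite hX).2
    fun q hq => eventually_not_accEvent hclosed hdet hnL (hX2 hq) (hXI hq)
  refine ⟨k, fun j p hp => ?_⟩
  have hp' : p ∈ subsetSeq δ (fun j => w (n + j)) X (k + j) := by
    rw [subsetSeq_add]
    simpa only [Nat.add_assoc] using hp
  obtain ⟨q, hq, hpq⟩ := mem_subsetSeq_iff.1 hp'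
  rw [Nat.add_assoc]
  exact hk (k + j) (Nat.le_add_right k j) q hq p hpq

end EventualSafety

section Successors

def nextN (δ : Q → A → Set Q) (Q1 : Set Q) (m : Macro Q) (a : A) : Set Q :=
  stepSet δ m.1 a ∩ Q1

def nextS (δ : Q → A → Set Q) (m : Macro Q) (a : A) : Set Q :=
  stepSet δ m.2.2.1 a

def nextC (δ : Q → A → Set Q) (Q2 : Set Q) (m : Macro Q) (a : A) : Set Q :=
  ((stepSet δ m.1 a ∩ Q2) ∪ stepSet δ m.2.1 a) \ nextS δ m a

def nextB (δ : Q → A → Set Q) (Q2 : Set Q) (m : Macro Q) (a : A) : Set Q :=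
  if m.2.2.2 = ∅ then nextC δ Q2 m a else stepSet δ m.2.2.2 a ∩ nextC δ Q2 m a

variable {δ : Q → A → Set Q} {Q1 Q2 F : Set Q} {δF : Set (Q × A × Q)} {m m' : Macro Q}
  {a : A}

lemma ncsbSucc_iff :
    NcsbSucc δ Q1 Q2 F δF m a m' ↔
      (¬ ∃ p ∈ m.2.2.1, ∃ q ∈ δ p a, (p, a, q) ∈ δF) ∧
      (m' = (nextN δ Q1 m a, nextC δ Q2 m a, nextS δ m a, nextB δ Q2 m a) ∨
        nextB δ Q2 m a ∩ F = ∅ ∧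
          m' = (nextN δ Q1 m a, nextC δ Q2 m a \ (nextS δ m a ∪ nextB δ Q2 m a),
            nextS δ m a ∪ nextB δ Q2 m a, ∅)) :=
  Iff.rfl

lemma nextB_subset_nextC : nextB δ Q2 m a ⊆ nextC δ Q2 m a := by
  unfold nextB
  split_ifs
  exacts [subset_rfl, Set.inter_subset_right]

lemma nextB_subset_stepSet (hB : m.2.2.2 ≠ ∅) : nextB δ Q2 m a ⊆ stepSet δ m.2.2.2 a := by
  rw [nextB, if_neg hB]
  exact Set.inter_subset_left

lemma mem_nextB {p p' : Q} (hp' : p' ∈ δ p a) (hC : p' ∈ nextC δ Q2 m a)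
    (hB : p ∈ m.2.2.2 ∨ m.2.2.2 = ∅) : p' ∈ nextB δ Q2 m a := by
  unfold nextB
  split_ifs with h
  · exact hC
  · exact ⟨mem_stepSet.2 ⟨p, hB.resolve_right h, hp'⟩, hC⟩

namespace NcsbSucc

lemma stepSet_subset (hpart : Q1 = Q2ᶜ) (h : NcsbSucc δ Q1 Q2 F δF m a m') :
    stepSet δ (m.1 ∪ m.2.1 ∪ m.2.2.1) a ⊆ m'.1 ∪ m'.2.1 ∪ m'.2.2.1 := by
  have hnext : stepSet δ (m.1 ∪ m.2.1 ∪ m.2.2.1) a ⊆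
      nextN δ Q1 m a ∪ nextC δ Q2 m a ∪ nextS δ m a := by
    intro p hp
    obtain ⟨r, hr, hpr⟩ := mem_stepSet.1 hp
    have hN : r ∈ m.1 → p ∈ stepSet δ m.1 a := fun h => mem_stepSet.2 ⟨r, h, hpr⟩
    have hC : r ∈ m.2.1 → p ∈ stepSet δ m.2.1 a := fun h => mem_stepSet.2 ⟨r, h, hpr⟩
    have hS : r ∈ m.2.2.1 → p ∈ stepSet δ m.2.2.1 a := fun h => mem_stepSet.2 ⟨r, h, hpr⟩
    simp only [nextN, nextC, nextS, hpart, Set.mem_union, Set.mem_inter_iff, Set.mem_sdiff,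
      Set.mem_compl_iff] at hr ⊢
    tauto
  rcases (ncsbSucc_iff.1 h).2 with rfl | ⟨-, rfl⟩
  · exact hnext
  · refine hnext.trans fun p hp => ?_
    simp only [Set.mem_union, Set.mem_sdiff] at hp ⊢
    tauto

lemma stepSet_S_subset (h : NcsbSucc δ Q1 Q2 F δF m a m') :
    stepSet δ m.2.2.1 a ⊆ m'.2.2.1 := by
  rcases (ncsbSucc_iff.1 h).2 with rfl | ⟨-, rfl⟩
  exacts [subset_rfl, Set.subset_union_left]

lemma mem_B {p p' : Q} (h : NcsbSucc δ Q1 Q2 F δF m a m') (hp' : p' ∈ δ p a)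
    (hC : p' ∈ m'.2.1) (hB : p ∈ m.2.2.2 ∨ m.2.2.2 = ∅) : p' ∈ m'.2.2.2 := by
  rcases (ncsbSucc_iff.1 h).2 with rfl | ⟨-, rfl⟩
  · exact mem_nextB hp' hC hB
  · exact absurd (Or.inr (mem_nextB hp' hC.1 hB)) hC.2

end NcsbSucc

end Successors

namespace NcsbRun

variable {δ : Q → A → Set Q} {Q1 Q2 I F : Set Q} {δF : Set (Q × A × Q)} {w : ℕ → A}
  {R : ℕ → Macro Q} {π : ℕ → Q}

lemma trace_mem_NCS (hpart : Q1 = Q2ᶜ) (hR : NcsbRun δ Q1 Q2 I F δF w R) (hπI : π 0 ∈ I)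
    (hπ : IsTrace δ w π) : ∀ i, π i ∈ (R i).1 ∪ (R i).2.1 ∪ (R i).2.2.1
  | 0 => by
    rw [hR.1, hpart]
    by_cases h : π 0 ∈ Q2
    exacts [Or.inl (Or.inr ⟨h, hπI⟩), Or.inl (Or.inl ⟨h, hπI⟩)]
  | i + 1 => (hR.2.2 i).stepSet_subset hpart
      (mem_stepSet.2 ⟨π i, trace_mem_NCS hpart hR hπI hπ i, hπ i⟩)

lemma trace_notMem_S (hR : NcsbRun δ Q1 Q2 I F δF w R) (hπ : IsTrace δ w π)
    (hπacc : BuchiAccT F δF w π) (i : ℕ) : π i ∉ (R i).2.2.1 := by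
  intro hi
  have hstay : ∀ j ≥ i, π j ∈ (R j).2.2.1 := fun j hj => by
    induction j, hj using Nat.le_induction with
    | base => exact hi
    | succ j _ ih => exact (hR.2.2 j).stepSet_S_subset (mem_stepSet.2 ⟨π j, ih, hπ j⟩)
  obtain ⟨j, hj, hF | hδF⟩ := hπacc i
  · exact ((hR.2.1 j).2.2.1 (hstay j hj)).2 hF
  · exact (hR.2.2 j).1 ⟨π j, hstay j hj, π (j + 1), hπ j, hδF⟩

lemma not_buchiLang (hpart : Q1 = Q2ᶜ) (hclosed : ∀ q ∈ Q2, ∀ a, δ q a ⊆ Q2)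
    (hF : F ⊆ Q2) (hδF : ∀ p a q, (p, a, q) ∈ δF → q ∈ δ p a ∧ q ∈ Q2)
    (hR : NcsbRun δ Q1 Q2 I F δF w R) (hacc : NcsbAcc R) : ¬ BuchiLang δ I F δF w := by
  rintro ⟨π, hπI, hπ, hπacc⟩
  obtain ⟨n, hn⟩ : ∃ n, π n ∈ Q2 := by
    obtain ⟨m, -, hF' | hδ⟩ := hπacc 0
    exacts [⟨m, hF hF'⟩, ⟨m + 1, (hδF _ _ _ hδ).2⟩]
  have hC : ∀ j ≥ n, π j ∈ (R j).2.1 := fun j hj => by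
    have hQ2 : π j ∈ Q2 := by
      induction j, hj using Nat.le_induction with
      | base => exact hn
      | succ j _ ih => exact hclosed _ ih _ (hπ j)
    rcases hR.trace_mem_NCS hpart hπI hπ j with (hN | hC) | hS
    · exact absurd hQ2 (by simpa [hpart] using (hR.2.1 j).1 hN)
    · exact hC
    · exact absurd hS (hR.trace_notMem_S hπ hπacc j)
  obtain ⟨t, ht, hBt⟩ := hacc n
  have hB : ∀ j ≥ t + 1, π j ∈ (R j).2.2.2 := fun j hj => by
    induction j, hj using Nat.le_induction with
    | base => exact (hR.2.2 t).mem_B (hπ t) (hC _ (by omega)) (Or.inr hBt)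
    | succ j hj ih => exact (hR.2.2 j).mem_B (hπ j) (hC _ (by omega)) (Or.inl ih)
  obtain ⟨m, hm, hBm⟩ := hacc (t + 1)
  simpa [hBm] using hB m hm

end NcsbRun

section GreedyRun

variable (δ : Q → A → Set Q) (Q1 Q2 I F : Set Q) (δF : Set (Q × A × Q)) (w : ℕ → A)

noncomputable def greedyStep (i : ℕ) (m : Macro Q) : Macro Q :=
  if Safe δ F δF w (i + 1) (nextB δ Q2 m (w i)) then
    (nextN δ Q1 m (w i), nextC δ Q2 m (w i) \ (nextS δ m (w i) ∪ nextB δ Q2 m (w i)),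
      nextS δ m (w i) ∪ nextB δ Q2 m (w i), ∅)
  else (nextN δ Q1 m (w i), nextC δ Q2 m (w i), nextS δ m (w i), nextB δ Q2 m (w i))

noncomputable def greedyRun : ℕ → Macro Q
  | 0 => (Q1 ∩ I, Q2 ∩ I, ∅, Q2 ∩ I)
  | i + 1 => greedyStep δ Q1 Q2 F δF w i (greedyRun i)

lemma greedyRun_succ (i : ℕ) :
    greedyRun δ Q1 Q2 I F δF w (i + 1) =
      greedyStep δ Q1 Q2 F δF w i (greedyRun δ Q1 Q2 I F δF w i) :=
  rfl

def GreedyInv (i : ℕ) (m : Macro Q) : Prop :=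
  m.1 ⊆ Q1 ∩ subsetSeq δ w I i ∧ m.2.1 ⊆ Q2 ∩ subsetSeq δ w I i ∧ m.2.2.1 ⊆ Q2 ∧
    Safe δ F δF w i m.2.2.1 ∧ m.2.2.2 ⊆ m.2.1

variable {δ Q1 Q2 I F δF w}

lemma greedyStep_inv (hclosed : ∀ q ∈ Q2, ∀ a, δ q a ⊆ Q2) {i : ℕ} {m : Macro Q}
    (h : GreedyInv δ Q1 Q2 I F δF w i m) :
    GreedyInv δ Q1 Q2 I F δF w (i + 1) (greedyStep δ Q1 Q2 F δF w i m) := by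
  obtain ⟨hN, hC, hS, hSafe, hB⟩ := h
  have hN' : nextN δ Q1 m (w i) ⊆ Q1 ∩ subsetSeq δ w I (i + 1) := fun p hp =>
    ⟨hp.2, stepSet_mono (fun _ hq => (hN hq).2) _ hp.1⟩
  have hC' : nextC δ Q2 m (w i) ⊆ Q2 ∩ subsetSeq δ w I (i + 1) := by
    rintro p ⟨⟨hpN, hpQ2⟩ | hpC, -⟩
    · exact ⟨hpQ2, stepSet_mono (fun _ hq => (hN hq).2) _ hpN⟩
    · exact ⟨stepSet_subset_of_closed hclosed (fun _ hq => (hC hq).1) _ hpC,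
        stepSet_mono (fun _ hq => (hC hq).2) _ hpC⟩
  have hS' : nextS δ m (w i) ⊆ Q2 := stepSet_subset_of_closed hclosed hS _
  have hB' : nextB δ Q2 m (w i) ⊆ nextC δ Q2 m (w i) := nextB_subset_nextC
  unfold greedyStep
  split_ifs with hsafe
  · exact ⟨hN', Set.sdiff_subset.trans hC', Set.union_subset hS' (fun _ hq => (hC' (hB' hq)).1),
      hSafe.stepSet.union hsafe, Set.empty_subset _⟩
  · exact ⟨hN', hC', hS', hSafe.stepSet, hB'⟩

lemma greedyRun_inv (hclosed : ∀ q ∈ Q2, ∀ a, δ q a ⊆ Q2) :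
    ∀ i, GreedyInv δ Q1 Q2 I F δF w i (greedyRun δ Q1 Q2 I F δF w i)
  | 0 => ⟨Set.inter_subset_inter_right _ subset_rfl, Set.inter_subset_inter_right _ subset_rfl,
      Set.empty_subset _, fun _ _ hp =>
        let ⟨_, hq, _⟩ := mem_subsetSeq_iff.1 hp
        absurd hq (Set.notMem_empty _),
      subset_rfl⟩
  | i + 1 => greedyStep_inv hclosed (greedyRun_inv hclosed i)

lemma greedyRun_ncsbRun (hclosed : ∀ q ∈ Q2, ∀ a, δ q a ⊆ Q2) :
    NcsbRun δ Q1 Q2 I F δF w (greedyRun δ Q1 Q2 I F δF w) := by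
  refine ⟨rfl, fun i => ?_, fun i => ?_⟩
  all_goals
    obtain ⟨hN, hC, hS, hSafe, hB⟩ := greedyRun_inv (I := I) (δF := δF) (w := w) hclosed i
  · exact ⟨fun _ hp => (hN hp).1, fun _ hp => (hC hp).1,
      fun p hp => ⟨hS hp, fun hF => hSafe.not_accEvent hp (Or.inl hF)⟩, hB⟩
  · refine ncsbSucc_iff.2
      ⟨fun ⟨p, hp, q, hq, hδF⟩ => hSafe.not_accEvent hp (Or.inr ⟨q, hq, hδF⟩), ?_⟩
    rw [greedyRun_succ, greedyStep]
    split_ifs with hsafe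
    · exact Or.inr ⟨Set.eq_empty_of_forall_notMem fun p hp =>
        hsafe.not_accEvent hp.1 (Or.inl hp.2), rfl⟩
    · exact Or.inl rfl

lemma greedyRun_B_subset {i : ℕ} (hB : (greedyRun δ Q1 Q2 I F δF w i).2.2.2 ≠ ∅) :
    (greedyRun δ Q1 Q2 I F δF w (i + 1)).2.2.2 ⊆
      stepSet δ (greedyRun δ Q1 Q2 I F δF w i).2.2.2 (w i) := by
  rw [greedyRun_succ, greedyStep]
  split_ifs
  exacts [Set.empty_subset _, nextB_subset_stepSet hB]

lemma greedyRun_B_eq_empty {i : ℕ} (hB : (greedyRun δ Q1 Q2 I F δF w i).2.2.2 ≠ ∅)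
    (hsafe : Safe δ F δF w (i + 1) (stepSet δ (greedyRun δ Q1 Q2 I F δF w i).2.2.2 (w i))) :
    (greedyRun δ Q1 Q2 I F δF w (i + 1)).2.2.2 = ∅ := by
  rw [greedyRun_succ, greedyStep, if_pos (hsafe.mono (nextB_subset_stepSet hB))]

lemma greedyRun_ncsbAcc [Finite Q] (hclosed : ∀ q ∈ Q2, ∀ a, δ q a ⊆ Q2)
    (hdet : ∀ q ∈ Q2, ∀ a, (δ q a).Subsingleton) (hnL : ¬ BuchiLang δ I F δF w) :
    NcsbAcc (greedyRun δ Q1 Q2 I F δF w) := by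
  set R := greedyRun δ Q1 Q2 I F δF w
  intro n
  by_contra! hne
  replace hne : ∀ m ≥ n, (R m).2.2.2 ≠ ∅ := fun m hm => (hne m hm).ne_empty
  have hdesc : ∀ j, (R (n + j)).2.2.2 ⊆ subsetSeq δ (fun k => w (n + k)) (R n).2.2.2 j := by
    intro j
    induction j with
    | zero => exact subset_rfl
    | succ j ih =>
      exact (greedyRun_B_subset (hne (n + j) (Nat.le_add_right n j))).trans
        (stepSet_mono ih _)
  obtain ⟨-, hC, -, -, hBC⟩ := greedyRun_inv hclosed n
  obtain ⟨k, hk⟩ := exists_safe_subsetSeq hclosed hdet hnL (Set.toFinite _)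
    (fun _ hq => (hC (hBC hq)).1) (fun _ hq => (hC (hBC hq)).2)
  exact hne (n + k + 1) (by omega) <|
    greedyRun_B_eq_empty (hne _ (by omega)) (hk.stepSet.mono (stepSet_mono (hdesc k) _))

end GreedyRun

/-- Correctness of NCSB-MaxRank: for every SDBA `A`, the construction recognizes
exactly `Σ^ω \ L(A)`. -/
theorem ncsb_maxrank_correct [Finite Q]
    (δ : Q → A → Set Q) (Q1 Q2 I F : Set Q) (δF : Set (Q × A × Q))
    (hpart : Q1 = Q2ᶜ)
    (hclosed : ∀ q ∈ Q2, ∀ a, δ q a ⊆ Q2)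
    (hdet : ∀ q ∈ Q2, ∀ a, (δ q a).Subsingleton)
    (hF : F ⊆ Q2)
    (hδF : ∀ p a q, (p, a, q) ∈ δF → q ∈ δ p a ∧ q ∈ Q2) :
    ∀ w : ℕ → A,
      (∃ R : ℕ → Macro Q, NcsbRun δ Q1 Q2 I F δF w R ∧ NcsbAcc R) ↔
        ¬ BuchiLang δ I F δF w := by
  intro w
  constructor
  · rintro ⟨R, hR, hacc⟩
    exact hR.not_buchiLang hpart hclosed hF hδF hacc
  · intro hnL
    exact ⟨greedyRun δ Q1 Q2 I F δF w, greedyRun_ncsbRun hclosed,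
      greedyRun_ncsbAcc hclosed hdet hnL⟩
end

section
/- The Miyano-Hayashi construction MiHay_θ with θ the identity function, applied to any co-Büchi automaton A_c, yields a deterministic Büchi automaton recognizing Σ^ω \ L(A_c). -/
attribute [local instance] Classical.propDecidable

universe u v

variable {A : Type u} {Q : Type v}

/-! If a run of `A_c` from `I` avoids `F` from time `n` on, then after the first breakpoint
(`B = ∅`) past `n` it stays inside `B` forever, so `B` is never emptied again. Conversely, if
`B ≠ ∅` from time `n` on, every state of `B (m + 1)` has a predecessor in `B m`, and every state
of `S (m + 1)` one in `S m`. Kőnig's lemma, applicable since `Q` is finite, then gives an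
infinite run through `S 0, …, S (n - 1), B n, B (n + 1), …`; it starts in `I` and avoids `F`
from time `n` on. -/

section Konig

variable {δ : Q → A → Set Q} {w : ℕ → A} {ρ : ℕ → Set Q}

theorem exists_path_to_mem (hstep : ∀ m, ρ (m + 1) ⊆ stepSet δ (ρ m) (w m)) :
    ∀ m, ∀ q ∈ ρ m, ∃ p : ℕ → Q, p m = q ∧ (∀ j < m, p (j + 1) ∈ δ (p j) (w j)) ∧
      ∀ j ≤ m, p j ∈ ρ j
  | 0, q, hq => ⟨fun _ => q, rfl, by simp, fun j hj => by rwa [Nat.le_zero.mp hj]⟩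
  | m + 1, q, hq => by
    obtain ⟨q', hq', hqq'⟩ := Set.mem_iUnion₂.mp (hstep m hq)
    obtain ⟨p, rfl, hpδ, hpρ⟩ := exists_path_to_mem hstep m q' hq'
    refine ⟨Function.update p (m + 1) q, by simp, fun j hj => ?_, fun j hj => ?_⟩
    · rcases Nat.lt_succ_iff_lt_or_eq.mp hj with hj | rfl
      · simpa [Function.update_apply, hj.ne, (Nat.lt_succ_of_lt hj).ne] using hpδ j hj
      · simpa using hqq'
    · rcases Nat.le_succ_iff.mp hj with hj | rfl
      · simpa [Function.update_apply, (Nat.lt_succ_of_le hj).ne] using hpρ j hj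
      · simpa using hq

abbrev FinPath (δ : Q → A → Set Q) (w : ℕ → A) (ρ : ℕ → Set Q) (k : ℕ) : Type v :=
  {p : Fin (k + 1) → Q //
    (∀ j : Fin k, p j.succ ∈ δ (p j.castSucc) (w j)) ∧ ∀ j : Fin (k + 1), p j ∈ ρ j}

def FinPath.restrict {i k : ℕ} (hik : i ≤ k) (p : FinPath δ w ρ k) : FinPath δ w ρ i :=
  ⟨p.1 ∘ Fin.castLE (by omega),
    fun j => by simpa [Fin.castLE_succ] using p.2.1 (Fin.castLE hik j),
    fun j => Fin.val_castLE _ j ▸ p.2.2 _⟩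

theorem traceSet_nonempty [Finite Q] (hstep : ∀ m, ρ (m + 1) ⊆ stepSet δ (ρ m) (w m))
    (hne : ∀ k, ∃ m ≥ k, (ρ m).Nonempty) : (TraceSet δ w ρ).Nonempty := by
  have (k : ℕ) : Nonempty (FinPath δ w ρ k) := by
    obtain ⟨m, hkm, q, hq⟩ := hne k
    obtain ⟨p, -, hpδ, hpρ⟩ := exists_path_to_mem hstep m q hq
    exact ⟨⟨fun j => p j, fun j => by simpa using hpδ j (by omega), fun j => hpρ j (by omega)⟩⟩
  obtain ⟨f, hf⟩ := exists_seq_forall_proj_of_forall_finite (α := FinPath δ w ρ)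
    (fun h => FinPath.restrict h) (fun _ p => by simp [FinPath.restrict])
    (fun _ _ _ _ _ p => Subtype.ext (funext fun j => by simp [FinPath.restrict]))
    (fun _ _ => Set.toFinite _)
  refine ⟨fun m => (f m).1 (Fin.last m), fun m => ?_, fun m => (f m).2.2 (Fin.last m)⟩
  have hlast : (f m).1 (Fin.last m) = (f (m + 1)).1 (Fin.last m).castSucc := by
    rw [← hf (Nat.le_succ m)]; rfl
  show (f (m + 1)).1 (Fin.last m).succ ∈ δ ((f m).1 (Fin.last m)) (w m)
  exact hlast ▸ (f (m + 1)).2.1 (Fin.last m)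

end Konig

section MiyanoHayashi

variable {δ : Q → A → Set Q} {F I : Set Q} {w : ℕ → A}

theorem mem_subsetSeq_of_isTrace {B : Set Q} {π : ℕ → Q} (h0 : π 0 ∈ B) (hπ : IsTrace δ w π) :
    ∀ m, π m ∈ subsetSeq δ w B m
  | 0 => h0
  | m + 1 => Set.mem_biUnion (mem_subsetSeq_of_isTrace h0 hπ m) (hπ m)

theorem mhRun_id_fst (m : ℕ) : (mhRun δ F id I w m).1 = subsetSeq δ w I m := by
  induction m with
  | zero => rfl
  | succ m ih => rw [subsetSeq, ← ih]; rfl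

theorem mhRun_id_snd_succ (m : ℕ) :
    (mhRun δ F id I w (m + 1)).2 =
      if (mhRun δ F id I w m).2 = ∅ then subsetSeq δ w I (m + 1) \ F
      else (stepSet δ (mhRun δ F id I w m).2 (w m) ∩ subsetSeq δ w I (m + 1)) \ F := by
  rw [← mhRun_id_fst]; rfl

theorem mhRun_id_snd_subset (m : ℕ) : (mhRun δ F id I w m).2 ⊆ subsetSeq δ w I m \ F := by
  cases m with
  | zero => exact subset_rfl
  | succ m =>
    rw [mhRun_id_snd_succ]
    split_ifs
    · exact subset_rfl
    · exact Set.sdiff_subset_sdiff_left Set.inter_subset_right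

theorem mem_mhRun_id_snd_of_isTrace {π : ℕ → Q} (h0 : π 0 ∈ I) (hπ : IsTrace δ w π) {n m : ℕ}
    (hF : ∀ j ≥ n, π j ∉ F) (hnm : n ≤ m) (hB : (mhRun δ F id I w m).2 = ∅) :
    ∀ j > m, π j ∈ (mhRun δ F id I w j).2 := by
  intro j hj
  induction j, hj using Nat.le_induction with
  | base =>
    rw [mhRun_id_snd_succ, if_pos hB]
    exact ⟨mem_subsetSeq_of_isTrace h0 hπ _, hF _ (by omega)⟩
  | succ j hj ih =>
    rw [mhRun_id_snd_succ, if_neg ((Set.nonempty_of_mem ih).ne_empty)]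
    exact ⟨⟨Set.mem_biUnion ih (hπ j), mem_subsetSeq_of_isTrace h0 hπ _⟩, hF _ (by omega)⟩

theorem not_coBuchiLang_of_mhAccepts (h : MhAccepts δ F id I w) : ¬ CoBuchiLang δ I F w := by
  rintro ⟨π, h0, hπ, n, hF⟩
  obtain ⟨m, hnm, hB⟩ := h n
  obtain ⟨k, hk, hBk⟩ := h (m + 1)
  simpa [hBk] using mem_mhRun_id_snd_of_isTrace h0 hπ hF hnm hB k hk

theorem coBuchiLang_of_not_mhAccepts [Finite Q] (h : ¬ MhAccepts δ F id I w) :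
    CoBuchiLang δ I F w := by
  obtain ⟨n, hn⟩ : ∃ n, ∀ m ≥ n, (mhRun δ F id I w m).2.Nonempty := by
    simpa [MhAccepts, Set.nonempty_iff_ne_empty] using h
  let ρ m := if m < n then subsetSeq δ w I m else (mhRun δ F id I w m).2
  have hρ_subset (m : ℕ) : ρ m ⊆ subsetSeq δ w I m := by
    unfold ρ
    split_ifs
    · exact subset_rfl
    · exact (mhRun_id_snd_subset m).trans Set.sdiff_subset
  have hstep (m : ℕ) : ρ (m + 1) ⊆ stepSet δ (ρ m) (w m) := by
    by_cases hm : m < n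
    · simpa only [ρ, if_pos hm, subsetSeq] using hρ_subset (m + 1)
    · simp only [ρ, if_neg hm, if_neg (by omega : ¬ m + 1 < n)]
      rw [mhRun_id_snd_succ, if_neg (hn m (by omega)).ne_empty]
      exact fun q hq => hq.1.1
  obtain ⟨π, hπ, hπρ⟩ := traceSet_nonempty hstep fun k =>
    ⟨k + n, by omega, by simpa [ρ] using hn (k + n) (by omega)⟩
  refine ⟨π, hρ_subset 0 (hπρ 0), hπ, n, fun m hm => ?_⟩
  exact (mhRun_id_snd_subset m (by simpa [ρ, not_lt.mpr hm] using hπρ m)).2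

end MiyanoHayashi

/-- The (deterministic) Miyano–Hayashi construction with the identity adjustment
function recognizes exactly the complement of the language of the co-BA. -/
theorem mihay_id_correct [Finite Q]
    (δ : Q → A → Set Q) (I F : Set Q) :
    ∀ w : ℕ → A, MhAccepts δ F id I w ↔ ¬ CoBuchiLang δ I F w :=
  fun _ => ⟨not_coBuchiLang_of_mhAccepts, not_imp_comm.mp coBuchiLang_of_not_mhAccepts⟩
end
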